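/- Let f(S) = 2·W₂²(S, Id₂) − W₂²(S, 9·Id₂) for 2×2 symmetric positive definite real matrices S. Then (i) 2·GM(S^{-1}, Id₂) − GM(S^{-1}, 9·Id₂) = −S^{-1/2}, so the Euclidean gradient Id₂ − (2·GM(S^{-1}, Id₂) − GM(S^{-1}, 9·Id₂)) = Id₂ + S^{-1/2} is positive definite for every such S; (ii) f(S) = Tr(S) + 2·Tr(S^{1/2}) − 14 > −14 for every such S, while the infimum of f over the 2×2 symmetric positive definite matrices equals −14; hence f attains no minimum (and has no stationary point) on the symmetric positive definite matrices. -/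

import Mathlib

/-! The two Bures–Wasserstein terms only involve `Σ = c • 1`, for which
`(S^{1/2} (c • 1) S^{1/2})^{1/2} = √c • S^{1/2}`; hence
`f(S) = Tr S + 2 Tr S^{1/2} − 14` and `2 GM(S⁻¹, 1) − GM(S⁻¹, 9 • 1) = (2 − 3) • S^{-1/2}`.
Both traces are positive, so `f > −14`, while `f (t • 1) = 2t + 4√t − 14 → −14` as `t → 0⁺`.
A stationary point would satisfy `S = −S^{1/2}`, impossible as `Tr S > 0 > −Tr S^{1/2}`. -/

open Matrix BigOperators Finset
open scoped Classical

/-- Unique positive semidefinite square root of a positive semidefinite matrix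
(and junk value `0` on other matrices). -/
noncomputable def msqrt {d : ℕ} (M : Matrix (Fin d) (Fin d) ℝ) :
    Matrix (Fin d) (Fin d) ℝ :=
  if h : M.PosSemidef then
    h.1.eigenvectorUnitary.1 * diagonal ((RCLike.ofReal : ℝ → ℝ) ∘ Real.sqrt ∘ h.1.eigenvalues) *
      (star h.1.eigenvectorUnitary : Matrix (Fin d) (Fin d) ℝ)
  else 0

/-- Smallest eigenvalue of a symmetric matrix (junk value `0` otherwise). -/
noncomputable def lmin {d : ℕ} (M : Matrix (Fin d) (Fin d) ℝ) : ℝ :=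
  if h : M.IsHermitian then ⨅ i, h.eigenvalues i else 0

/-- Largest eigenvalue of a symmetric matrix (junk value `0` otherwise). -/
noncomputable def lmax {d : ℕ} (M : Matrix (Fin d) (Fin d) ℝ) : ℝ :=
  if h : M.IsHermitian then ⨆ i, h.eigenvalues i else 0

/-- Squared Bures–Wasserstein distance. -/
noncomputable def W2sq {d : ℕ} (A B : Matrix (Fin d) (Fin d) ℝ) : ℝ :=
  A.trace + B.trace - 2 * (msqrt (msqrt A * B * msqrt A)).trace

/-- The conditional barycenter objective `F`. -/
noncomputable def Fobj {d n : ℕ} (Sig : Fin n → Matrix (Fin d) (Fin d) ℝ)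
    (lam : Fin n → ℝ) (S : Matrix (Fin d) (Fin d) ℝ) : ℝ :=
  ∑ k, lam k * W2sq S (Sig k)

/-- Geometric mean `GM(S⁻¹, Σ) = S^{-1/2} (S^{1/2} Σ S^{1/2})^{1/2} S^{-1/2}`. -/
noncomputable def GMinv {d : ℕ} (S Sigma : Matrix (Fin d) (Fin d) ℝ) :
    Matrix (Fin d) (Fin d) ℝ :=
  (msqrt S)⁻¹ * msqrt (msqrt S * Sigma * msqrt S) * (msqrt S)⁻¹

/-- The Spectral Dominance of Positive Weights condition. -/
def SDPW {d n : ℕ} (Sig : Fin n → Matrix (Fin d) (Fin d) ℝ) (lam : Fin n → ℝ) : Prop :=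
  ∑ j ∈ Finset.univ.filter (fun k => lam k < 0), (-lam j) * Real.sqrt (lmax (Sig j))
    < ∑ i ∈ Finset.univ.filter (fun k => 0 < lam k), lam i * Real.sqrt (lmin (Sig i))

/-- The function of Example 1: `f(S) = 2 W₂²(S, I₂) − W₂²(S, 9 I₂)`. -/
noncomputable def f18 (S : Matrix (Fin 2) (Fin 2) ℝ) : ℝ :=
  2 * W2sq S 1 - W2sq S ((9 : ℝ) • 1)

open scoped MatrixOrder
open Filter Topology

section MatrixSqrt

variable {d : ℕ} {M : Matrix (Fin d) (Fin d) ℝ}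

theorem msqrt_eq_cfcSqrt (hM : M.PosSemidef) : msqrt M = CFC.sqrt M := by
  rw [CFC.sqrt_eq_real_sqrt M hM.nonneg, cfcₙ_eq_cfc (hf0 := Real.sqrt_zero), hM.1.cfc_eq,
    IsHermitian.cfc, msqrt, dif_pos hM, Unitary.conjStarAlgAut_apply]

theorem posSemidef_msqrt (hM : M.PosSemidef) : (msqrt M).PosSemidef := by
  rw [msqrt_eq_cfcSqrt hM]
  exact (CFC.sqrt_nonneg M).posSemidef

theorem msqrt_mul_self (hM : M.PosSemidef) : msqrt M * msqrt M = M := by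
  rw [msqrt_eq_cfcSqrt hM]
  exact CFC.sqrt_mul_sqrt_self M hM.nonneg

theorem msqrt_eq_of_mul_self {A : Matrix (Fin d) (Fin d) ℝ} (hA : A.PosSemidef) (h : A * A = M) :
    msqrt M = A := by
  have hM : M.PosSemidef := by
    simpa only [← h, hA.1.eq] using posSemidef_conjTranspose_mul_self A
  rw [msqrt_eq_cfcSqrt hM]
  exact CFC.sqrt_unique h hA.nonneg

theorem posDef_msqrt (hM : M.PosDef) : (msqrt M).PosDef :=
  (posSemidef_msqrt hM.posSemidef).posDef_iff_isUnit.mpr <|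
    isUnit_of_mul_isUnit_left (y := msqrt M) (by rw [msqrt_mul_self hM.posSemidef]; exact hM.isUnit)

theorem msqrt_smul {c : ℝ} (hc : 0 ≤ c) (hM : M.PosSemidef) :
    msqrt (c • M) = √c • msqrt M := by
  refine msqrt_eq_of_mul_self ((posSemidef_msqrt hM).smul (Real.sqrt_nonneg c)) ?_
  rw [smul_mul_smul_comm, Real.mul_self_sqrt hc, msqrt_mul_self hM]

theorem msqrt_one : msqrt (1 : Matrix (Fin d) (Fin d) ℝ) = 1 :=
  msqrt_eq_of_mul_self PosSemidef.one (mul_one 1)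

theorem msqrt_conj_smul_one {c : ℝ} (hc : 0 ≤ c) (hM : M.PosSemidef) :
    msqrt (msqrt M * (c • 1) * msqrt M) = √c • msqrt M := by
  rw [mul_smul_comm, mul_one, smul_mul_assoc, msqrt_mul_self hM, msqrt_smul hc hM]

theorem GMinv_smul_one {c : ℝ} (hc : 0 ≤ c) (hM : M.PosDef) :
    GMinv M (c • 1) = √c • (msqrt M)⁻¹ := by
  have hinv : (msqrt M)⁻¹ * msqrt M = 1 := nonsing_inv_mul _ <|
    (isUnit_iff_isUnit_det _).mp (posDef_msqrt hM).isUnit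
  rw [GMinv, msqrt_conj_smul_one hc hM.posSemidef, mul_smul_comm, smul_mul_assoc, hinv, one_mul]

theorem msqrt_conj_one (hM : M.PosSemidef) : msqrt (msqrt M * 1 * msqrt M) = msqrt M := by
  simpa using msqrt_conj_smul_one zero_le_one hM

theorem GMinv_one (hM : M.PosDef) : GMinv M 1 = (msqrt M)⁻¹ := by
  simpa using GMinv_smul_one zero_le_one hM

theorem W2sq_smul_one {c : ℝ} (hc : 0 ≤ c) (hM : M.PosSemidef) :
    W2sq M (c • 1) = M.trace + c * d - 2 * √c * (msqrt M).trace := by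
  rw [W2sq, msqrt_conj_smul_one hc hM, trace_smul, trace_smul, trace_one, Fintype.card_fin,
    smul_eq_mul, smul_eq_mul, mul_assoc]

theorem W2sq_one (hM : M.PosSemidef) : W2sq M 1 = M.trace + d - 2 * (msqrt M).trace := by
  simpa using W2sq_smul_one zero_le_one hM

end MatrixSqrt

theorem Real.sqrt_nine : √(9 : ℝ) = 3 := by
  rw [show (9 : ℝ) = 3 ^ 2 by norm_num, Real.sqrt_sq (by norm_num)]

theorem f18_eq {S : Matrix (Fin 2) (Fin 2) ℝ} (hS : S.PosSemidef) :
    f18 S = S.trace + 2 * (msqrt S).trace - 14 := by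
  rw [f18, W2sq_one hS, W2sq_smul_one (by norm_num) hS, Real.sqrt_nine]
  push_cast
  ring

theorem neg_fourteen_lt_f18 {S : Matrix (Fin 2) (Fin 2) ℝ} (hS : S.PosDef) : -14 < f18 S := by
  rw [f18_eq hS.posSemidef]
  linarith [hS.trace_pos, (posDef_msqrt hS).trace_pos]

theorem f18_smul_one {t : ℝ} (ht : 0 ≤ t) :
    f18 (t • (1 : Matrix (Fin 2) (Fin 2) ℝ)) = 2 * t + 4 * √t - 14 := by
  rw [f18_eq (PosSemidef.one.smul ht), msqrt_smul ht PosSemidef.one, msqrt_one, trace_smul,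
    trace_smul, trace_one, Fintype.card_fin, smul_eq_mul, smul_eq_mul]
  push_cast
  ring

theorem isGLB_f18 :
    IsGLB {x : ℝ | ∃ S : Matrix (Fin 2) (Fin 2) ℝ, S.PosDef ∧ f18 S = x} (-14) := by
  refine isGLB_of_mem_closure ?_ ?_
  · rintro _ ⟨S, hS, rfl⟩
    exact (neg_fourteen_lt_f18 hS).le
  · have hlim : Tendsto (fun t : ℝ ↦ 2 * t + 4 * √t - 14) (𝓝[>] 0) (𝓝 (-14)) := by
      have : Continuous (fun t : ℝ ↦ 2 * t + 4 * √t - 14) := by fun_prop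
      simpa using (this.tendsto 0).mono_left nhdsWithin_le_nhds
    refine mem_closure_of_tendsto hlim (eventually_nhdsWithin_of_forall fun t (ht : 0 < t) ↦ ?_)
    exact ⟨t • 1, PosDef.one.smul ht, f18_smul_one ht.le⟩

/-- in Example 1, (i) `2 GM(S⁻¹, I) − GM(S⁻¹, 9I) = −S^(-1/2)` so the
Euclidean gradient `I + S^(-1/2)` is positive definite everywhere; (ii)
`f(S) = Tr S + 2 Tr S^(1/2) − 14 > −14`, the infimum of `f` over the positive definite
matrices is `−14`, hence `f` attains no minimum and has no stationary point. -/
theorem stmt18 :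
    (∀ S : Matrix (Fin 2) (Fin 2) ℝ, S.PosDef →
      (2 : ℝ) • GMinv S 1 - GMinv S ((9 : ℝ) • 1) = -(msqrt S)⁻¹ ∧
      ((1 : Matrix (Fin 2) (Fin 2) ℝ) + (msqrt S)⁻¹).PosDef) ∧
    (∀ S : Matrix (Fin 2) (Fin 2) ℝ, S.PosDef →
      f18 S = S.trace + 2 * (msqrt S).trace - 14 ∧ -14 < f18 S) ∧
    IsGLB {x : ℝ | ∃ S : Matrix (Fin 2) (Fin 2) ℝ, S.PosDef ∧ f18 S = x} (-14) ∧
    ¬ (∃ S : Matrix (Fin 2) (Fin 2) ℝ, S.PosDef ∧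
        ∀ S' : Matrix (Fin 2) (Fin 2) ℝ, S'.PosDef → f18 S ≤ f18 S') ∧
    ¬ (∃ S : Matrix (Fin 2) (Fin 2) ℝ, S.PosDef ∧
        S = (2 : ℝ) • msqrt (msqrt S * 1 * msqrt S)
          - msqrt (msqrt S * ((9 : ℝ) • 1) * msqrt S)) := by
  refine ⟨fun S hS ↦ ⟨?_, PosDef.one.add (posDef_msqrt hS).inv⟩,
    fun S hS ↦ ⟨f18_eq hS.posSemidef, neg_fourteen_lt_f18 hS⟩, isGLB_f18, ?_, ?_⟩
  · rw [GMinv_one hS, GMinv_smul_one (by norm_num) hS, Real.sqrt_nine, ← sub_smul]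
    norm_num
  · rintro ⟨S, hS, hmin⟩
    refine (neg_fourteen_lt_f18 hS).not_ge (isGLB_f18.2 ?_)
    rintro _ ⟨S', hS', rfl⟩
    exact hmin S' hS'
  · rintro ⟨S, hS, hstat⟩
    rw [msqrt_conj_one hS.posSemidef, msqrt_conj_smul_one (by norm_num) hS.posSemidef,
      Real.sqrt_nine, ← sub_smul] at hstat
    have htr := congrArg trace hstat
    rw [trace_smul, smul_eq_mul] at htr
    linarith [hS.trace_pos, (posDef_msqrt hS).trace_pos]
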